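/- If A₁, A₂ are symmetric n×n matrices and there exist μ₁, μ₂ ∈ R with μ₁A₁ + μ₂A₂ positive definite, then the set E = {x ∈ R^n : x^T A₁ x = 1 and x^T A₂ x = 1} is compact. -/

import Mathlib

open Matrix

/-- The quadratic form `xᵀ A x` on Euclidean space. -/
noncomputable def quadForm {n : ℕ} (A : Matrix (Fin n) (Fin n) ℝ)
    (x : EuclideanSpace ℝ (Fin n)) : ℝ :=
  ∑ i, ∑ j, A i j * x i * x j

/-!
On `E` the form `xᵀ(μ₁A₁ + μ₂A₂)x` equals `μ₁ + μ₂`. A continuous function that is positive off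
the origin and homogeneous of degree two is at least `c ‖x‖²`, where `c > 0` is its minimum on the
unit sphere; hence `E` is bounded, and it is closed as a common level set of continuous functions.
-/

section Coercive

variable {V : Type*} [NormedAddCommGroup V] [NormedSpace ℝ V] [ProperSpace V] {q : V → ℝ}

theorem exists_pos_mul_sq_norm_le_of_homogeneous (hq : Continuous q)
    (hsmul : ∀ (t : ℝ) x, q (t • x) = t ^ 2 * q x) (hpos : ∀ x, x ≠ 0 → 0 < q x) :
    ∃ c > 0, ∀ x, c * ‖x‖ ^ 2 ≤ q x := by
  have hnormalize : ∀ x : V, x ≠ 0 → ‖x‖⁻¹ • x ∈ Metric.sphere (0 : V) 1 := fun x hx => by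
    simp [norm_smul, inv_mul_cancel₀ (norm_ne_zero_iff.mpr hx)]
  rcases (Metric.sphere (0 : V) 1).eq_empty_or_nonempty with hempty | hne
  · refine ⟨1, one_pos, fun x => ?_⟩
    obtain rfl : x = 0 := by
      by_contra hx
      simpa [hempty] using hnormalize x hx
    simpa using (hsmul 0 0).ge
  obtain ⟨u, hu, hmin⟩ := (isCompact_sphere (0 : V) 1).exists_isMinOn hne hq.continuousOn
  have hu0 : u ≠ 0 := ne_zero_of_mem_unit_sphere ⟨u, hu⟩
  refine ⟨q u, hpos u hu0, fun x => ?_⟩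
  rcases eq_or_ne x 0 with rfl | hx
  · simpa using (hsmul 0 0).ge
  have hle : q u ≤ q (‖x‖⁻¹ • x) := hmin (hnormalize x hx)
  calc q u * ‖x‖ ^ 2 ≤ q (‖x‖⁻¹ • x) * ‖x‖ ^ 2 := by gcongr
    _ = q x := by
      rw [hsmul, mul_comm, ← mul_assoc, ← mul_pow, mul_inv_cancel₀ (norm_ne_zero_iff.mpr hx),
        one_pow, one_mul]

theorem isBounded_setOf_le_of_homogeneous (hq : Continuous q)
    (hsmul : ∀ (t : ℝ) x, q (t • x) = t ^ 2 * q x) (hpos : ∀ x, x ≠ 0 → 0 < q x) (r : ℝ) :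
    Bornology.IsBounded {x | q x ≤ r} := by
  obtain ⟨c, hc, hcq⟩ := exists_pos_mul_sq_norm_le_of_homogeneous hq hsmul hpos
  refine isBounded_iff_forall_norm_le.mpr ⟨√(r / c), fun x hx => ?_⟩
  have hsq : ‖x‖ ^ 2 ≤ r / c := by
    rw [le_div_iff₀ hc, mul_comm]
    exact (hcq x).trans hx
  simpa using Real.abs_le_sqrt hsq

end Coercive

section QuadForm

variable {n : ℕ}

theorem quadForm_eq_dotProduct (A : Matrix (Fin n) (Fin n) ℝ) (x : EuclideanSpace ℝ (Fin n)) :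
    quadForm A x = (x : Fin n → ℝ) ⬝ᵥ A *ᵥ x := by
  simp only [quadForm, dotProduct, mulVec, Finset.mul_sum]
  exact Finset.sum_congr rfl fun i _ => Finset.sum_congr rfl fun j _ => by ring

theorem continuous_quadForm (A : Matrix (Fin n) (Fin n) ℝ) : Continuous (quadForm A) := by
  unfold quadForm
  fun_prop

theorem quadForm_smul_right (A : Matrix (Fin n) (Fin n) ℝ) (t : ℝ) (x : EuclideanSpace ℝ (Fin n)) :
    quadForm A (t • x) = t ^ 2 * quadForm A x := by
  simp only [quadForm, PiLp.smul_apply, smul_eq_mul, Finset.mul_sum]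
  exact Finset.sum_congr rfl fun i _ => Finset.sum_congr rfl fun j _ => by ring

theorem quadForm_add (A B : Matrix (Fin n) (Fin n) ℝ) (x : EuclideanSpace ℝ (Fin n)) :
    quadForm (A + B) x = quadForm A x + quadForm B x := by
  simp only [quadForm, Matrix.add_apply, add_mul, Finset.sum_add_distrib]

theorem quadForm_smul (c : ℝ) (A : Matrix (Fin n) (Fin n) ℝ) (x : EuclideanSpace ℝ (Fin n)) :
    quadForm (c • A) x = c * quadForm A x := by
  simp only [quadForm, Matrix.smul_apply, smul_eq_mul, Finset.mul_sum, mul_assoc]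

end QuadForm

theorem stmt2 {n : ℕ} (A₁ A₂ : Matrix (Fin n) (Fin n) ℝ)
    (μ₁ μ₂ : ℝ)
    (hpd : ∀ x : Fin n → ℝ, x ≠ 0 → 0 < x ⬝ᵥ (μ₁ • A₁ + μ₂ • A₂).mulVec x) :
    IsCompact {x : EuclideanSpace ℝ (Fin n) | quadForm A₁ x = 1 ∧ quadForm A₂ x = 1} := by
  set B := μ₁ • A₁ + μ₂ • A₂
  have hBpos : ∀ x, x ≠ 0 → 0 < quadForm B x := fun x hx => by
    rw [quadForm_eq_dotProduct]
    exact hpd _ (by simpa using hx)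
  refine Metric.isCompact_of_isClosed_isBounded
    ((isClosed_eq (continuous_quadForm A₁) continuous_const).inter
      (isClosed_eq (continuous_quadForm A₂) continuous_const))
    ((isBounded_setOf_le_of_homogeneous (continuous_quadForm B) (quadForm_smul_right B) hBpos
      (μ₁ + μ₂)).subset ?_)
  rintro x ⟨h₁, h₂⟩
  simp [B, quadForm_add, quadForm_smul, h₁, h₂]
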